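/- Lemma B.3 (asymptotic description of the kernel matrix, extension of El Karoui). Assume the kernel satisfies Assumptions (A.1)–(A.3), the inputs follow the covariance or sphere model in the high-dimensional regime tr(Σ_{d(n)})/n^β → c > 0, the bandwidth is τ = tr(Σ_d), z_i = x_i/√τ, and set m = ⌊2/β⌋. Let M = (g(1,1,1) − Σ_{q=0}^{m} g_q(1,1))·I_n + Σ_{q=0}^{m} (ZᵀZ)^{∘q} ∘ K_{g_q}, where Z is the d×n matrix with columns z_i, ∘ denotes the Hadamard (entrywise) product, (ZᵀZ)^{∘q} the q-fold Hadamard power, and (K_{g_q})_{ij} = g_q(‖z_i‖₂², ‖z_j‖₂²) (each K_{g_q} positive semidefinite). Then for every γ > 0 and fixed ε > 0 there exists N such that for all n ≥ N and every sample satisfying max_{i,j≤n} |x_iᵀx_j/tr(Σ_d) − δ_{ij}| ≤ n^{−β/2}(log n)^{(1+ε)/2} (the event E_X), the kernel matrix K with K_{ij} = g(‖z_i‖₂², ‖z_j‖₂², z_iᵀz_j) satisfies ‖K − M‖_op ≤ γ; i.e. ‖K − M‖_op → 0 conditioned on E_X. -/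

import Mathlib

open MeasureTheory ProbabilityTheory Filter Matrix
open scoped Topology NNReal ENNReal

noncomputable section
def dotp {d : ℕ} (x y : Fin d → ℝ) : ℝ := ∑ i, x i * y i
def sqnorm {d : ℕ} (x : Fin d → ℝ) : ℝ := dotp x x
def IsCoordDist (ν : Measure ℝ) : Prop :=
  ν = gaussianReal 0 1 ∨
    (IsProbabilityMeasure ν ∧ (∃ C : ℝ, ∀ᵐ x ∂ν, |x| ≤ C) ∧
      (∫ x, x ∂ν) = 0 ∧ (∫ x, x ^ 2 ∂ν) = 1)
/-- The positive semidefinite square root of a positive semidefinite matrix, as defined in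
Mathlib (Dec 2024) as `Matrix.PosSemidef.sqrt`; removed from current Mathlib. -/
def Matrix.PosSemidef.sqrt {n : Type*} [Fintype n] [DecidableEq n] {A : Matrix n n ℝ}
    (hA : A.PosSemidef) : Matrix n n ℝ :=
  hA.1.eigenvectorUnitary.1 * diagonal ((↑) ∘ (fun x : ℝ => Real.sqrt x) ∘ hA.1.eigenvalues) *
    (star hA.1.eigenvectorUnitary : Matrix n n ℝ)
def IsCovarianceModel {d : ℕ} (S : Matrix (Fin d) (Fin d) ℝ) (hS : S.PosSemidef)
    (μ : Measure (Fin d → ℝ)) : Prop :=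
  ∃ ν : Measure ℝ, IsCoordDist ν ∧
    μ = (Measure.pi fun _ : Fin d => ν).map (fun w => hS.sqrt.mulVec w)
def IsSphereModel {d : ℕ} (S : Matrix (Fin d) (Fin d) ℝ) (hS : S.PosSemidef)
    (μ : Measure (Fin d → ℝ)) : Prop :=
  ∃ μZ : Measure (Fin d → ℝ), IsCovarianceModel S hS μZ ∧
    μ = μZ.map (fun z => (Real.sqrt S.trace / Real.sqrt (sqnorm z)) • z)
def OpNormOne {d : ℕ} (S : Matrix (Fin d) (Fin d) ℝ) : Prop :=
  IsGreatest {r : ℝ | ∃ x : Fin d → ℝ, sqnorm x = 1 ∧ dotp x (S.mulVec x) = r} 1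
def IsPSDKernel1 (q : ℝ → ℝ → ℝ) : Prop :=
  ∀ (N : ℕ) (u : Fin N → ℝ), (Matrix.of fun a b => q (u a) (u b)).PosSemidef
def AssumptionA1 (g : ℝ → ℝ → ℝ → ℝ) (gj : ℕ → ℝ → ℝ → ℝ) : Prop :=
  (∃ δ > (0:ℝ), ∀ u v t : ℝ, u ∈ Set.Icc (1 - δ) (1 + δ) → v ∈ Set.Icc (1 - δ) (1 + δ) →
      |t| ≤ 1 + δ → HasSum (fun j : ℕ => gj j u v * t ^ j) (g u v t)) ∧
    ∀ j, IsPSDKernel1 (gj j)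
def AssumptionA2 (g : ℝ → ℝ → ℝ → ℝ) : Prop :=
  ∃ δL > (0:ℝ), ∃ L : ℝ≥0, LipschitzOnWith L (fun u => g u u u) (Set.Icc (1 - δL) (1 + δL))
def AssumptionA3 (β : ℝ) (gj : ℕ → ℝ → ℝ → ℝ) : Prop :=
  (∀ i ≤ ⌊2 / β⌋₊, ∃ U ∈ 𝓝 ((1:ℝ), (1:ℝ)),
      ContDiffOn ℝ (⌊2 / β⌋₊ + 1 - i) (fun p : ℝ × ℝ => gj i p.1 p.2) U) ∧
    ∃ J, ⌊2 / β⌋₊ < J ∧ 0 < gj J 1 1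
def kermap {d : ℕ} (g : ℝ → ℝ → ℝ → ℝ) (τ : ℝ) (x y : Fin d → ℝ) : ℝ :=
  g (sqnorm x / τ) (sqnorm y / τ) (dotp x y / τ)
def kernelMatrix {d n : ℕ} (k : (Fin d → ℝ) → (Fin d → ℝ) → ℝ)
    (xs : Fin n → Fin d → ℝ) : Matrix (Fin n) (Fin n) ℝ :=
  Matrix.of fun i j => k (xs i) (xs j)
def ridgeEstimator {d n : ℕ} (k : (Fin d → ℝ) → (Fin d → ℝ) → ℝ) (lam : ℝ)
    (fstar : (Fin d → ℝ) → ℝ) (xs : Fin n → Fin d → ℝ) (x : Fin d → ℝ) : ℝ :=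
  dotProduct (fun i => fstar (xs i))
    (((kernelMatrix k xs + lam • (1 : Matrix (Fin n) (Fin n) ℝ))⁻¹).mulVec
      (fun i => k (xs i) x))
def biasOf {d : ℕ} (est : (Fin d → ℝ) → ℝ) (fstar : (Fin d → ℝ) → ℝ)
    (μ : Measure (Fin d → ℝ)) : ℝ :=
  ∫ x, (est x - fstar x) ^ 2 ∂μ
def polyApproxError (d m : ℕ) (f : (Fin d → ℝ) → ℝ) (μ : Measure (Fin d → ℝ)) : ℝ :=
  ⨅ p : {p : MvPolynomial (Fin d) ℝ // p.totalDegree ≤ m},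
    ∫ x, (f x - MvPolynomial.eval x (p : MvPolynomial (Fin d) ℝ)) ^ 2 ∂μ
def alphaExpG (α : ℝ) (g : ℝ → ℝ → ℝ → ℝ) : Prop :=
  ∀ u v t : ℝ, g u v t = Real.exp (-(u + v - 2 * t) ^ (α / 2))


/-!
Write `z_i = x_i / √τ`, `w_i = ‖z_i‖²` and `t_ij = z_iᵀ z_j`. On the event `E_X` every `w_i` is
within `η_n = n^(-β/2) (log n)^((1+ε)/2)` of `1` and every off-diagonal `t_ij` within `η_n` of `0`.

Off the diagonal, `K - M` is the tail `∑_{q > m} g_q(w_i, w_j) t_ij^q` of the series (A.1).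
Positive semidefiniteness gives `|g_q(u, v)| ≤ (g_q(u, u) + g_q(v, v)) / 2`, and
`g_q(u, u) u^q ≤ g(u, u, u)`, which is bounded near `u = 1` by (A.2); hence `|g_q| ≤ B 2^q` near
`(1, 1)` and the tail is `O(η_n^(m+1))`. Since `β (m + 1) / 2 > 1`, even `n η_n^(m+1) → 0`.

On the diagonal, `K - M` is `f(w_i) - f(1)` for `f(u) = g(u, u, u) - ∑_{q ≤ m} g_q(u, u) u^q`, which
is continuous at `1` by (A.2) and (A.3).

Finally, a matrix whose diagonal entries are at most `a` and whose off-diagonal entries are at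
most `b` in absolute value has operator norm at most `a + n b`.
-/

open Finset

theorem IsPSDKernel1.apply_self_nonneg {q : ℝ → ℝ → ℝ} (hq : IsPSDKernel1 q) (u : ℝ) :
    0 ≤ q u u := by
  simpa [Matrix.mulVec, dotProduct] using (hq 1 ![u]).dotProduct_mulVec_nonneg ![1]

theorem IsPSDKernel1.abs_apply_le {q : ℝ → ℝ → ℝ} (hq : IsPSDKernel1 q) (u v : ℝ) :
    |q u v| ≤ (q u u + q v v) / 2 := by
  have hplus := (hq 2 ![u, v]).dotProduct_mulVec_nonneg ![1, 1]
  have hminus := (hq 2 ![u, v]).dotProduct_mulVec_nonneg ![1, -1]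
  have hsymm := congrFun (congrFun (hq 2 ![u, v]).1 0) 1
  simp [Matrix.mulVec, dotProduct, Fin.sum_univ_two, Matrix.conjTranspose_apply]
    at hplus hminus hsymm
  rw [abs_le]
  constructor <;> linarith

theorem abs_le_two_pow_of_hasSum_diag {q : ℕ → ℝ → ℝ → ℝ} {f : ℝ → ℝ} {s : Set ℝ} {B : ℝ}
    (hq : ∀ j, IsPSDKernel1 (q j)) (hf : ∀ u ∈ s, HasSum (fun j => q j u u * u ^ j) (f u))
    (hB : ∀ u ∈ s, f u ≤ B) (hs : ∀ u ∈ s, 1 / 2 ≤ u) (j : ℕ) {u v : ℝ} (hu : u ∈ s)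
    (hv : v ∈ s) : |q j u v| ≤ B * 2 ^ j := by
  have hdiag : ∀ u ∈ s, q j u u ≤ B * 2 ^ j := fun u hu => by
    have hu₀ : 0 ≤ u := by linarith [hs u hu]
    calc q j u u ≤ q j u u * (2 * u) ^ j :=
          le_mul_of_one_le_right ((hq j).apply_self_nonneg u)
            (one_le_pow₀ (by linarith [hs u hu]))
      _ = q j u u * u ^ j * 2 ^ j := by ring
      _ ≤ B * 2 ^ j := by
          gcongr
          exact (le_hasSum (hf u hu) j fun i _ =>
            mul_nonneg ((hq i).apply_self_nonneg u) (pow_nonneg hu₀ i)).trans (hB u hu)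
  linarith [(hq j).abs_apply_le u v, hdiag u hu, hdiag v hv]

theorem abs_sub_sum_range_le_of_hasSum {f : ℕ → ℝ} {s C r : ℝ} (hs : HasSum f s)
    (hf : ∀ j, |f j| ≤ C * r ^ j) (hr₀ : 0 ≤ r) (hr : r ≤ 1 / 2) (m : ℕ) :
    |s - ∑ j ∈ range m, f j| ≤ 2 * C * r ^ m := by
  have hC : 0 ≤ C := by simpa using (abs_nonneg _).trans (hf 0)
  have htail : HasSum (fun j => f (j + m)) (s - ∑ j ∈ range m, f j) :=
    (hasSum_nat_add_iff' m).mpr hs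
  have hgeom : HasSum (fun j => C * r ^ m * r ^ j) (C * r ^ m * (1 - r)⁻¹) :=
    (hasSum_geometric_of_lt_one hr₀ (by linarith)).mul_left _
  calc |s - ∑ j ∈ range m, f j| ≤ C * r ^ m * (1 - r)⁻¹ :=
        htail.norm_le_of_bounded hgeom fun j => by
          simpa only [Real.norm_eq_abs, pow_add, mul_comm, mul_assoc] using hf (j + m)
    _ ≤ C * r ^ m * 2 := by
        gcongr
        exact inv_le_of_inv_le₀ two_pos (by linarith)
    _ = 2 * C * r ^ m := by ring

theorem AssumptionA2.continuousAt_diag {g : ℝ → ℝ → ℝ → ℝ} (hA2 : AssumptionA2 g) :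
    ContinuousAt (fun u => g u u u) 1 := by
  obtain ⟨δ, hδ, L, hlip⟩ := hA2
  exact hlip.continuousOn.continuousAt (Icc_mem_nhds (by linarith) (by linarith))

theorem AssumptionA1.exists_abs_sub_sum_range_le {g : ℝ → ℝ → ℝ → ℝ} {gj : ℕ → ℝ → ℝ → ℝ}
    (hA1 : AssumptionA1 g gj) (hA2 : AssumptionA2 g) (m : ℕ) :
    ∃ δ > 0, ∃ C ≥ 0, ∀ u v t, |u - 1| < δ → |v - 1| < δ → |t| < δ →
      |g u v t - ∑ q ∈ range m, gj q u v * t ^ q| ≤ C * |t| ^ m := by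
  obtain ⟨⟨δ₁, hδ₁, hsum⟩, hpsd⟩ := hA1
  set B := |g 1 1 1| + 1
  obtain ⟨δ₂, hδ₂, hB⟩ := Metric.eventually_nhds_iff.mp <|
    hA2.continuousAt_diag.eventually (gt_mem_nhds (lt_of_le_of_lt (le_abs_self _) (lt_add_one _)))
  set δ := min (min δ₁ δ₂) (1 / 4)
  have hδ₁' : δ ≤ δ₁ := (min_le_left _ _).trans (min_le_left _ _)
  have hδ₂' : δ ≤ δ₂ := (min_le_left _ _).trans (min_le_right _ _)
  have hδ' : δ ≤ 1 / 4 := min_le_right _ _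
  have mem_Icc : ∀ {u}, |u - 1| < δ → u ∈ Set.Icc (1 - δ₁) (1 + δ₁) := fun hu => by
    constructor <;> linarith [abs_lt.mp hu]
  have hcoeff : ∀ j u v, |u - 1| < δ → |v - 1| < δ → |gj j u v| ≤ B * 2 ^ j :=
    fun j u v hu hv => abs_le_two_pow_of_hasSum_diag (s := {u | |u - 1| < δ}) hpsd
      (fun u (hu : |u - 1| < δ) => hsum u u u (mem_Icc hu) (mem_Icc hu)
        (abs_le.mpr ⟨by linarith [abs_lt.mp hu], by linarith [abs_lt.mp hu]⟩))
      (fun u (hu : |u - 1| < δ) => (hB (by rw [Real.dist_eq]; linarith)).le)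
      (fun u (hu : |u - 1| < δ) => by linarith [abs_lt.mp hu]) j hu hv
  refine ⟨δ, by positivity, 2 * B * 2 ^ m, by positivity, fun u v t hu hv ht => ?_⟩
  calc |g u v t - ∑ q ∈ range m, gj q u v * t ^ q| ≤ 2 * B * (2 * |t|) ^ m :=
        abs_sub_sum_range_le_of_hasSum (hsum u v t (mem_Icc hu) (mem_Icc hv) (by linarith))
          (fun j => by
            rw [abs_mul, abs_pow, mul_pow, ← mul_assoc]
            gcongr
            exact hcoeff j u v hu hv)
          (by positivity) (by linarith) m
    _ = 2 * B * 2 ^ m * |t| ^ m := by ring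

theorem AssumptionA3.continuousAt_sub_sum_range {β : ℝ} {g : ℝ → ℝ → ℝ → ℝ}
    {gj : ℕ → ℝ → ℝ → ℝ} (hA3 : AssumptionA3 β gj) (hA2 : AssumptionA2 g) :
    ContinuousAt (fun u => g u u u - ∑ q ∈ range (⌊2 / β⌋₊ + 1), gj q u u * u ^ q) 1 := by
  refine hA2.continuousAt_diag.sub
    (tendsto_finsetSum _ fun q hq => ContinuousAt.mul ?_ (continuous_pow q).continuousAt)
  obtain ⟨U, hU, hgq⟩ := hA3.1 q (Nat.lt_succ_iff.mp (mem_range.mp hq))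
  exact (hgq.contDiffAt hU).continuousAt.comp
    (f := fun u : ℝ => (u, u)) (continuous_id.prodMk continuous_id).continuousAt

theorem abs_dotProduct_mulVec_le {n : ℕ} (A : Matrix (Fin n) (Fin n) ℝ) (v : Fin n → ℝ)
    {a b : ℝ} (hb : 0 ≤ b) (hA : ∀ i j, |A i j| ≤ if i = j then a else b) :
    |v ⬝ᵥ (A *ᵥ v)| ≤ (a + n * b) * ∑ i, v i ^ 2 := by
  have hA' : ∀ i j, |A i j| ≤ (if i = j then a else 0) + b := fun i j =>
    (hA i j).trans (by split_ifs <;> linarith)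
  have hcs : (∑ i, |v i|) ^ 2 ≤ n * ∑ i, v i ^ 2 := by
    simpa [sq_abs] using sq_sum_le_card_mul_sum_sq (s := univ) (f := fun i => |v i|)
  calc |v ⬝ᵥ (A *ᵥ v)| = |∑ i, ∑ j, v i * A i j * v j| := by
        simp [dotProduct, mulVec, mul_sum, mul_assoc]
    _ ≤ ∑ i, ∑ j, |v i| * ((if i = j then a else 0) + b) * |v j| := by
        refine (abs_sum_le_sum_abs _ _).trans (sum_le_sum fun i _ =>
          (abs_sum_le_sum_abs _ _).trans (sum_le_sum fun j _ => ?_))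
        rw [abs_mul, abs_mul]
        gcongr
        exact hA' i j
    _ = a * ∑ i, v i ^ 2 + b * (∑ i, |v i|) ^ 2 := by
        simp only [mul_add, add_mul, sum_add_distrib, mul_ite, ite_mul, mul_zero, zero_mul,
          sum_ite_eq, mem_univ, if_true]
        rw [sq, sum_mul_sum, mul_sum]
        congr 1
        · exact sum_congr rfl fun i _ => by rw [← sq_abs (v i)]; ring
        · rw [mul_sum]
          exact sum_congr rfl fun i _ => by rw [mul_sum]; exact sum_congr rfl fun j _ => by ring
    _ ≤ (a + n * b) * ∑ i, v i ^ 2 := by linear_combination b * hcs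

/-- The matrix `M` of the statement is the case `m = ⌊2/β⌋₊ + 1`: it uses the coefficient kernels
`g_0, …, g_(m-1)`. -/
def truncatedKernelMatrix {d n : ℕ} (g : ℝ → ℝ → ℝ → ℝ) (gj : ℕ → ℝ → ℝ → ℝ) (m : ℕ)
    (zs : Fin n → Fin d → ℝ) : Matrix (Fin n) (Fin n) ℝ :=
  Matrix.of fun i j => (if i = j then g 1 1 1 - ∑ q ∈ range m, gj q 1 1 else 0) +
    ∑ q ∈ range m, dotp (zs i) (zs j) ^ q * gj q (sqnorm (zs i)) (sqnorm (zs j))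

theorem abs_dotProduct_kernelMatrix_sub_truncatedKernelMatrix_le {d n m : ℕ}
    {g : ℝ → ℝ → ℝ → ℝ} {gj : ℕ → ℝ → ℝ → ℝ} (zs : Fin n → Fin d → ℝ) {η a b : ℝ} (hb : 0 ≤ b)
    (hdiag : ∀ u, |u - 1| ≤ η →
      |g u u u - ∑ q ∈ range m, gj q u u * u ^ q -
        (g 1 1 1 - ∑ q ∈ range m, gj q 1 1 * 1 ^ q)| ≤ a)
    (hoff : ∀ u v t, |u - 1| ≤ η → |v - 1| ≤ η → |t| ≤ η →
      |g u v t - ∑ q ∈ range m, gj q u v * t ^ q| ≤ b)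
    (hz : ∀ i j, |dotp (zs i) (zs j) - if i = j then 1 else 0| ≤ η) (v : Fin n → ℝ) :
    |v ⬝ᵥ ((kernelMatrix (kermap g 1) zs - truncatedKernelMatrix g gj m zs) *ᵥ v)| ≤
      (a + n * b) * ∑ i, v i ^ 2 := by
  have hw : ∀ i, |sqnorm (zs i) - 1| ≤ η := fun i => by simpa [sqnorm] using hz i i
  refine abs_dotProduct_mulVec_le _ v hb fun i j => ?_
  simp only [Matrix.sub_apply, kernelMatrix, kermap, truncatedKernelMatrix, Matrix.of_apply,
    div_one]
  split_ifs with hij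
  · subst hij
    convert hdiag _ (hw i) using 2
    simp only [sqnorm, one_pow, mul_one, mul_comm (dotp (zs i) (zs i) ^ _)]
    ring
  · simpa [mul_comm] using hoff _ _ _ (hw i) (hw j) (by simpa [hij] using hz i j)

theorem dotp_inv_sqrt_smul {d : ℕ} {τ : ℝ} (hτ : 0 ≤ τ) (x y : Fin d → ℝ) :
    dotp ((√τ)⁻¹ • x) ((√τ)⁻¹ • y) = dotp x y / τ := by
  have hsq : (√τ)⁻¹ * (√τ)⁻¹ = τ⁻¹ := by rw [← mul_inv, Real.mul_self_sqrt hτ]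
  simp only [dotp, Pi.smul_apply, smul_eq_mul, div_eq_inv_mul, mul_sum, ← hsq]
  exact sum_congr rfl fun i _ => by ring

theorem tendsto_rpow_mul_log_rpow_atTop_zero {a : ℝ} (b : ℝ) (ha : a < 0) :
    Tendsto (fun x : ℝ => x ^ a * Real.log x ^ b) atTop (𝓝 0) :=
  (isLittleO_log_rpow_rpow_atTop b (neg_pos.mpr ha)).tendsto_div_nhds_zero.congr'
    ((eventually_gt_atTop 0).mono fun x hx => by
      rw [Real.rpow_neg hx.le, div_inv_eq_mul, mul_comm])

theorem tendsto_mul_rpow_neg_mul_log_rpow_pow_atTop_zero {b κ : ℝ} {k : ℕ} (hk : 1 < b * k) :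
    Tendsto (fun x : ℝ => x * (x ^ (-b) * Real.log x ^ κ) ^ k) atTop (𝓝 0) := by
  have hk₀ : k ≠ 0 := by rintro rfl; norm_num at hk
  have hexp : (k : ℝ)⁻¹ - b < 0 := by
    rw [sub_neg, inv_lt_iff_one_lt_mul₀ (by positivity)]
    linarith [mul_comm (k : ℝ) b]
  have := ((tendsto_rpow_mul_log_rpow_atTop_zero κ hexp).pow k).congr'
    ((eventually_gt_atTop 0).mono fun x hx => by
      rw [sub_eq_add_neg, Real.rpow_add hx, mul_assoc, mul_pow,
        Real.rpow_inv_natCast_pow hx.le hk₀])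
  simpa [zero_pow hk₀] using this

theorem eventually_pos_of_tendsto_div_rpow {f : ℕ → ℝ} {β c : ℝ} (hc : 0 < c)
    (h : Tendsto (fun n => f n / (n : ℝ) ^ β) atTop (𝓝 c)) : ∀ᶠ n in atTop, 0 < f n :=
  (h.eventually_const_lt hc).mono fun n hn => by
    rcases div_pos_iff.mp hn with h | h
    · exact h.1
    · exact absurd h.2 (Real.rpow_nonneg (Nat.cast_nonneg n) β).not_gt

theorem asymptotic_description_of_kernel_matrix_general
    -- high-dimensional regime
    (β c : ℝ) (hβ : 0 < β) (hc : 0 < c)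
    (d : ℕ → ℕ)
    (S : ∀ n, Matrix (Fin (d n)) (Fin (d n)) ℝ)
    (hreg : Tendsto (fun n => (S n).trace / (n : ℝ) ^ β) atTop (𝓝 c))
    -- the kernel satisfies Assumptions (A.1)-(A.3)
    (g : ℝ → ℝ → ℝ → ℝ) (gj : ℕ → ℝ → ℝ → ℝ)
    (hker : AssumptionA1 g gj ∧ AssumptionA2 g ∧ AssumptionA3 β gj) :
    -- conclusion (with m = ⌊2/β⌋, z_i = x_i/√(tr Σ)): on the event E_X, for n large,
    -- ‖K − M‖_op ≤ γ, where
    -- M = (g(1,1,1) − Σ_{q≤m} g_q(1,1))·I + Σ_{q≤m} (ZᵀZ)^{∘q} ∘ K_{g_q}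
    ∀ γ : ℝ, 0 < γ → ∀ ε : ℝ, 0 < ε → ∃ N : ℕ, ∀ n ≥ N,
      ∀ xs : Fin n → (Fin (d n) → ℝ),
        -- the concentration event E_X for the sample
        (∀ i j : Fin n,
          |dotp (xs i) (xs j) / (S n).trace - (if i = j then (1:ℝ) else 0)| ≤
            (n : ℝ) ^ (-(β / 2)) * Real.log n ^ ((1 + ε) / 2)) →
        -- operator-norm bound for the symmetric matrix K − M, via quadratic forms
        ∀ v : Fin n → ℝ,
          |dotProduct v
              (((kernelMatrix (kermap g 1) (fun i => (Real.sqrt (S n).trace)⁻¹ • xs i)) -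
                ((Matrix.of fun i j : Fin n =>
                  (if i = j then
                    g 1 1 1 - ∑ q ∈ Finset.range (⌊2 / β⌋₊ + 1), gj q 1 1
                  else 0) +
                  ∑ q ∈ Finset.range (⌊2 / β⌋₊ + 1),
                    (dotp ((Real.sqrt (S n).trace)⁻¹ • xs i)
                        ((Real.sqrt (S n).trace)⁻¹ • xs j)) ^ q *
                      gj q (sqnorm ((Real.sqrt (S n).trace)⁻¹ • xs i))
                        (sqnorm ((Real.sqrt (S n).trace)⁻¹ • xs j))))).mulVec v)| ≤
            γ * (∑ i, v i ^ 2) := by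
  obtain ⟨hA1, hA2, hA3⟩ := hker
  intro γ hγ ε _
  set m := ⌊2 / β⌋₊ + 1
  have hm : 1 < β / 2 * m := by
    have := Nat.lt_floor_add_one (2 / β)
    rw [div_lt_iff₀ hβ] at this
    push_cast [m]
    linarith
  obtain ⟨δ, hδ, C, hC, hoff⟩ := hA1.exists_abs_sub_sum_range_le hA2 m
  obtain ⟨ρ, hρ, hdiag⟩ :=
    Metric.continuousAt_iff.mp (hA3.continuousAt_sub_sum_range hA2) (γ / 2) (half_pos hγ)
  set η : ℕ → ℝ := fun n => (n : ℝ) ^ (-(β / 2)) * Real.log n ^ ((1 + ε) / 2)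
  have hη : Tendsto η atTop (𝓝 0) :=
    (tendsto_rpow_mul_log_rpow_atTop_zero _ (by linarith)).comp tendsto_natCast_atTop_atTop
  have hnη : Tendsto (fun n : ℕ => n * (C * η n ^ m)) atTop (𝓝 0) := by
    simpa [mul_left_comm] using
      ((tendsto_mul_rpow_neg_mul_log_rpow_pow_atTop_zero hm).comp
        tendsto_natCast_atTop_atTop).const_mul C
  obtain ⟨N, hN⟩ := eventually_atTop.mp <|
    (hη.eventually (gt_mem_nhds (lt_min hδ hρ))).and <|
      (hnη.eventually (ge_mem_nhds (half_pos hγ))).and (eventually_pos_of_tendsto_div_rpow hc hreg)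
  refine ⟨N, fun n hn xs hEX v => ?_⟩
  obtain ⟨hηn, hnηn, hτ⟩ := hN n hn
  have hη₀ : 0 ≤ η n := by positivity
  have hηδ : η n < δ := (lt_min_iff.mp hηn).1
  calc _ ≤ (γ / 2 + n * (C * η n ^ m)) * ∑ i, v i ^ 2 :=
        abs_dotProduct_kernelMatrix_sub_truncatedKernelMatrix_le (η := η n) _ (by positivity)
          (fun u hu => by
            simpa only [Real.dist_eq] using
              (hdiag (by rw [Real.dist_eq]; exact hu.trans_lt (lt_min_iff.mp hηn).2)).le)
          (fun u v t hu hv ht =>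
            (hoff u v t (hu.trans_lt hηδ) (hv.trans_lt hηδ) (ht.trans_lt hηδ)).trans (by gcongr))
          (fun i j => by simpa [dotp_inv_sqrt_smul hτ.le] using hEX i j) v
    _ ≤ γ * ∑ i, v i ^ 2 := by gcongr; linarith

theorem asymptotic_description_of_kernel_matrix
    -- high-dimensional regime
    (β c : ℝ) (hβ : 0 < β) (hc : 0 < c)
    (d : ℕ → ℕ)
    (S : ∀ n, Matrix (Fin (d n)) (Fin (d n)) ℝ)
    (hS : ∀ n, (S n).PosSemidef) (hSnorm : ∀ n, OpNormOne (S n))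
    (hreg : Tendsto (fun n => (S n).trace / (n : ℝ) ^ β) atTop (𝓝 c))
    -- the kernel satisfies Assumptions (A.1)-(A.3)
    (g : ℝ → ℝ → ℝ → ℝ) (gj : ℕ → ℝ → ℝ → ℝ)
    (hgcont : Continuous fun p : ℝ × ℝ × ℝ => g p.1 p.2.1 p.2.2)
    (hker : AssumptionA1 g gj ∧ AssumptionA2 g ∧ AssumptionA3 β gj) :
    -- conclusion (with m = ⌊2/β⌋, z_i = x_i/√(tr Σ)): on the event E_X, for n large,
    -- ‖K − M‖_op ≤ γ, where
    -- M = (g(1,1,1) − Σ_{q≤m} g_q(1,1))·I + Σ_{q≤m} (ZᵀZ)^{∘q} ∘ K_{g_q}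
    ∀ γ : ℝ, 0 < γ → ∀ ε : ℝ, 0 < ε → ∃ N : ℕ, ∀ n ≥ N,
      ∀ xs : Fin n → (Fin (d n) → ℝ),
        -- the concentration event E_X for the sample
        (∀ i j : Fin n,
          |dotp (xs i) (xs j) / (S n).trace - (if i = j then (1:ℝ) else 0)| ≤
            (n : ℝ) ^ (-(β / 2)) * Real.log n ^ ((1 + ε) / 2)) →
        -- operator-norm bound for the symmetric matrix K − M, via quadratic forms
        ∀ v : Fin n → ℝ,
          |dotProduct v
              (((kernelMatrix (kermap g 1) (fun i => (Real.sqrt (S n).trace)⁻¹ • xs i)) -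
                ((Matrix.of fun i j : Fin n =>
                  (if i = j then
                    g 1 1 1 - ∑ q ∈ Finset.range (⌊2 / β⌋₊ + 1), gj q 1 1
                  else 0) +
                  ∑ q ∈ Finset.range (⌊2 / β⌋₊ + 1),
                    (dotp ((Real.sqrt (S n).trace)⁻¹ • xs i)
                        ((Real.sqrt (S n).trace)⁻¹ • xs j)) ^ q *
                      gj q (sqnorm ((Real.sqrt (S n).trace)⁻¹ • xs i))
                        (sqnorm ((Real.sqrt (S n).trace)⁻¹ • xs j))))).mulVec v)| ≤
            γ * (∑ i, v i ^ 2) :=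
  asymptotic_description_of_kernel_matrix_general β c hβ hc d S hreg g gj hker
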